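/- For the test sequence λ^{(j₀,ν₀)} defined by λ_{j,m} = φ₁(2^{-ν₀})^{-1} if j = j₀ and Q_{j₀,m} ⊂ Q_{ν₀,0}, and λ_{j,m} = 0 otherwise (where ν₀ ≤ j₀, ν₀ ∈ ℤ, j₀ ∈ ℕ₀, φ₁ ∈ G_{p₁}), one has ‖λ^{(j₀,ν₀)} | n^{s₁}_{φ₁,p₁,q₁}‖ = 2^{j₀ s₁}. -/

import Mathlib

open MeasureTheory ENNReal NNReal Classical

/-- The dyadic cube `Q_{j,k} = 2^{-j}([0,1)^d + k)` in `ℝ^d`. -/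
def dyadicCube (d : ℕ) (j : ℤ) (k : Fin d → ℤ) : Set (Fin d → ℝ) :=
  {x | ∀ i, (2 : ℝ) ^ (-j) * (k i : ℝ) ≤ x i ∧ x i < (2 : ℝ) ^ (-j) * ((k i : ℝ) + 1)}

/-- The level-`j` building block of the generalised Besov-Morrey sequence quasi-norm:
`sup_{ν ≤ j, k ∈ ℤ^d} φ(2^{-ν})·2^{(ν-j)d/p}·(Σ_{m : Q_{j,m} ⊆ Q_{ν,k}} |λ_m|^p)^{1/p}`. -/
noncomputable def levelNorm (d : ℕ) (φ : ℝ → ℝ) (p : ℝ) (j : ℕ)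
    (lam : (Fin d → ℤ) → ℂ) : ℝ≥0∞ :=
  ⨆ (ν : ℤ) (_ : ν ≤ (j : ℤ)) (k : Fin d → ℤ),
    ENNReal.ofReal (φ ((2 : ℝ) ^ (-ν))) *
      ENNReal.ofReal ((2 : ℝ) ^ (((ν : ℝ) - (j : ℝ)) * ((d : ℝ) / p))) *
      (∑' m : {m : Fin d → ℤ // dyadicCube d (j : ℤ) m ⊆ dyadicCube d ν k},
          ENNReal.ofReal (‖lam m.1‖ ^ p)) ^ (1 / p)

/-- The quasi-norm of the generalised Besov-Morrey sequence space `n^s_{φ,p,q}`: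
`(Σ_j 2^{jsq}·[levelNorm_j]^q)^{1/q}`, with the sup modification for `q = ∞`. -/
noncomputable def bmNorm (d : ℕ) (φ : ℝ → ℝ) (s p : ℝ) (q : ℝ≥0∞)
    (lam : ℕ → (Fin d → ℤ) → ℂ) : ℝ≥0∞ :=
  if q = ∞ then ⨆ j : ℕ, ENNReal.ofReal ((2 : ℝ) ^ ((j : ℝ) * s)) * levelNorm d φ p j (lam j)
  else (∑' j : ℕ,
      (ENNReal.ofReal ((2 : ℝ) ^ ((j : ℝ) * s)) * levelNorm d φ p j (lam j)) ^ q.toReal) ^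
    (1 / q.toReal)

/-- Membership of `φ` in the class `G_p`: `φ : (0,∞) → [0,∞)` is nondecreasing and
`t ↦ φ(t)·t^{-d/p}` is nonincreasing. -/
def memG (d : ℕ) (p : ℝ) (φ : ℝ → ℝ) : Prop :=
  (∀ t, 0 < t → 0 ≤ φ t) ∧ MonotoneOn φ (Set.Ioi 0) ∧
    AntitoneOn (fun t => φ t * t ^ (-(d : ℝ) / p)) (Set.Ioi 0)

/-! ### Auxiliary lemmas -/

lemma cube_subset_iff {d : ℕ} {j ν : ℤ} (hνj : ν ≤ j) (m k : Fin d → ℤ) :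
    dyadicCube d j m ⊆ dyadicCube d ν k ↔
      ∀ i, 2 ^ (j - ν).toNat * k i ≤ m i ∧ m i < 2 ^ (j - ν).toNat * (k i + 1) := by
  have h2pos : (0:ℝ) < (2:ℝ) ^ (-j) := zpow_pos (by norm_num) _
  have hcast : (2:ℝ) ^ (j - ν).toNat = (2:ℝ) ^ (j - ν) := by
    rw [← zpow_natCast (2:ℝ), Int.toNat_of_nonneg (sub_nonneg.2 hνj)]
  have hkey : ∀ a : ℝ, (2:ℝ) ^ (-ν) * a = (2:ℝ) ^ (-j) * ((2:ℝ) ^ (j - ν) * a) := by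
    intro a
    rw [← mul_assoc, ← zpow_add₀ (two_ne_zero (α := ℝ))]
    congr 2
    ring
  constructor
  · intro h i
    have hx : (fun i' => (2:ℝ) ^ (-j) * (m i' : ℝ)) ∈ dyadicCube d j m := by
      intro i'
      exact ⟨le_refl _, mul_lt_mul_of_pos_left (lt_add_one ((m i' : ℝ))) h2pos⟩
    obtain ⟨h1, h2⟩ := h hx i
    rw [hkey] at h1 h2
    have h1' := (mul_le_mul_iff_right₀ h2pos).1 h1
    have h2' := (mul_lt_mul_iff_right₀ h2pos).1 h2
    rw [← hcast] at h1' h2'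
    constructor
    · exact_mod_cast h1'
    · exact_mod_cast h2'
  · intro h x hx i
    obtain ⟨ha, hb⟩ := h i
    obtain ⟨hxa, hxb⟩ := hx i
    have ha' : ((2:ℝ) ^ (j - ν) * (k i : ℝ)) ≤ (m i : ℝ) := by
      rw [← hcast]; exact_mod_cast ha
    have hb' : ((m i : ℝ) + 1) ≤ (2:ℝ) ^ (j - ν) * ((k i : ℝ) + 1) := by
      rw [← hcast]
      have : (m i + 1 : ℤ) ≤ 2 ^ (j - ν).toNat * (k i + 1) := hb
      exact_mod_cast this
    constructor
    · rw [hkey]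
      calc (2:ℝ) ^ (-j) * ((2:ℝ) ^ (j-ν) * (k i:ℝ)) ≤ (2:ℝ) ^ (-j) * (m i : ℝ) :=
          (mul_le_mul_iff_right₀ h2pos).2 ha'
        _ ≤ x i := hxa
    · rw [hkey]
      calc x i < (2:ℝ) ^ (-j) * ((m i : ℝ) + 1) := hxb
        _ ≤ (2:ℝ) ^ (-j) * ((2:ℝ)^(j-ν) * ((k i:ℝ)+1)) := (mul_le_mul_iff_right₀ h2pos).2 hb'

noncomputable def cubeFinset (d : ℕ) (n : ℕ) (k : Fin d → ℤ) : Finset (Fin d → ℤ) :=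
  Fintype.piFinset fun i => Finset.Ico (2 ^ n * k i) (2 ^ n * (k i + 1))

lemma mem_cubeFinset {d n : ℕ} {k m : Fin d → ℤ} :
    m ∈ cubeFinset d n k ↔ ∀ i, 2 ^ n * k i ≤ m i ∧ m i < 2 ^ n * (k i + 1) := by
  simp [cubeFinset, Fintype.mem_piFinset, Finset.mem_Ico]

lemma card_cubeFinset (d n : ℕ) (k : Fin d → ℤ) :
    (cubeFinset d n k).card = 2 ^ (n * d) := by
  rw [cubeFinset, Fintype.card_piFinset]
  have : ∀ i : Fin d, (Finset.Ico (2 ^ n * k i) (2 ^ n * (k i + 1))).card = 2 ^ n := by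
    intro i
    rw [Int.card_Ico]
    have : 2 ^ n * (k i + 1) - 2 ^ n * k i = (2:ℤ) ^ n := by ring
    rw [this, show ((2:ℤ)^n) = ((2^n : ℕ) : ℤ) by push_cast; ring, Int.toNat_natCast]
  simp only [this, Finset.prod_const, Finset.card_univ, Fintype.card_fin]
  rw [← pow_mul]

lemma my_tsum_le {d : ℕ} (g : (Fin d → ℤ) → ℝ≥0∞) (P : (Fin d → ℤ) → Prop)
    (C : ℝ≥0∞) (F : Finset (Fin d → ℤ))
    (hb : ∀ m, P m → g m ≤ Set.indicator (↑F) (fun _ => C) m) :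
    ∑' m : {m // P m}, g m.1 ≤ F.card * C := by
  have h1 : ∑' m : {m // P m}, g m.1 = ∑' m, Set.indicator {m | P m} g m :=
    tsum_subtype _ _
  rw [h1]
  calc ∑' m, Set.indicator {m | P m} g m
      ≤ ∑' m, Set.indicator (↑F) (fun _ => C) m := by
        apply ENNReal.tsum_le_tsum
        intro m
        by_cases h : P m
        · rw [Set.indicator_of_mem (show m ∈ {m | P m} from h)]; exact hb m h
        · rw [Set.indicator_of_notMem (show m ∉ {m | P m} from h)]; exact zero_le
    _ = ∑ m ∈ F, C := (sum_eq_tsum_indicator _ _).symm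
    _ = F.card * C := by rw [Finset.sum_const, nsmul_eq_mul]

lemma my_tsum_const {d : ℕ} (C : ℝ≥0∞) (P : (Fin d → ℤ) → Prop)
    (F : Finset (Fin d → ℤ)) (hPF : ∀ m, P m ↔ m ∈ F) :
    ∑' _ : {m // P m}, C = F.card * C := by
  have h1 : ∑' _ : {m // P m}, C = ∑' m, Set.indicator {m | P m} (fun _ => C) m :=
    tsum_subtype {m | P m} (fun _ => C)
  have h2 : {m : Fin d → ℤ | P m} = ↑F := Set.ext fun m => hPF m
  rw [h1, h2, ← sum_eq_tsum_indicator, Finset.sum_const, nsmul_eq_mul]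

lemma two_zpow_mem (ν : ℤ) : (2:ℝ) ^ (-ν) ∈ Set.Ioi (0:ℝ) := zpow_pos (by norm_num : (0:ℝ) < 2) _

lemma memG_pos {d : ℕ} {p : ℝ} {φ : ℝ → ℝ} (h : memG d p φ) (hφ1 : φ 1 = 1)
    {t : ℝ} (ht : 0 < t) : 0 < φ t := by
  rcases le_or_gt 1 t with h1 | h1
  · have := h.2.1 (Set.mem_Ioi.2 one_pos) (Set.mem_Ioi.2 ht) h1
    linarith
  · have h2 := h.2.2 (Set.mem_Ioi.2 ht) (Set.mem_Ioi.2 one_pos) h1.le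
    simp only [Real.one_rpow, hφ1, one_mul] at h2
    have hpos : (0:ℝ) < t ^ (-(d:ℝ)/p) := Real.rpow_pos_of_pos ht _
    nlinarith [h.1 t ht]

lemma memG_mono {d : ℕ} {p : ℝ} {φ : ℝ → ℝ} (h : memG d p φ) {ν ν₀ : ℤ} (hle : ν₀ ≤ ν) :
    φ ((2:ℝ) ^ (-ν)) ≤ φ ((2:ℝ) ^ (-ν₀)) := by
  apply h.2.1 (two_zpow_mem ν) (two_zpow_mem ν₀)
  apply zpow_le_zpow_right₀ (by norm_num) (by omega)

lemma memG_anti {d : ℕ} {p : ℝ} {φ : ℝ → ℝ} (h : memG d p φ)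
    {ν ν₀ : ℤ} (hle : ν ≤ ν₀) :
    φ ((2:ℝ) ^ (-ν)) * (2:ℝ) ^ (((ν:ℝ) - (ν₀:ℝ)) * ((d:ℝ)/p)) ≤ φ ((2:ℝ) ^ (-ν₀)) := by
  have key : ∀ μ : ℤ, ((2:ℝ) ^ (-μ)) ^ (-(d:ℝ)/p) = (2:ℝ) ^ ((μ:ℝ) * ((d:ℝ)/p)) := by
    intro μ
    rw [← Real.rpow_intCast 2 (-μ), ← Real.rpow_mul (by norm_num)]
    push_cast
    ring_nf
  have h2 := h.2.2 (two_zpow_mem ν₀) (two_zpow_mem ν)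
    (zpow_le_zpow_right₀ (by norm_num) (by omega : -ν₀ ≤ -ν))
  simp only [key] at h2
  have hpos : (0:ℝ) < (2:ℝ) ^ (-(ν₀:ℝ) * ((d:ℝ)/p)) := Real.rpow_pos_of_pos (by norm_num) _
  have h3 := mul_le_mul_of_nonneg_right h2 hpos.le
  calc φ ((2:ℝ) ^ (-ν)) * (2:ℝ) ^ (((ν:ℝ) - (ν₀:ℝ)) * ((d:ℝ)/p))
      = φ ((2:ℝ) ^ (-ν)) * (2:ℝ) ^ ((ν:ℝ) * ((d:ℝ)/p)) * (2:ℝ) ^ (-(ν₀:ℝ) * ((d:ℝ)/p)) := by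
        rw [mul_assoc, ← Real.rpow_add (by norm_num)]
        ring_nf
    _ ≤ φ ((2:ℝ) ^ (-ν₀)) * (2:ℝ) ^ ((ν₀:ℝ) * ((d:ℝ)/p)) * (2:ℝ) ^ (-(ν₀:ℝ) * ((d:ℝ)/p)) := h3
    _ = φ ((2:ℝ) ^ (-ν₀)) := by
        rw [mul_assoc, ← Real.rpow_add (by norm_num)]
        ring_nf
        simp

lemma rpow_calc (p c : ℝ) (hp : 0 < p) (hc : 0 ≤ c) (a : ℝ) (N : ℕ) :
    (2:ℝ) ^ a * (((2:ℝ) ^ N * c ^ p) ^ (1/p)) = (2:ℝ) ^ (a + (N:ℝ)/p) * c := by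
  rw [Real.mul_rpow (by positivity) (by positivity),
      ← Real.rpow_natCast 2 N, ← Real.rpow_mul (by norm_num),
      ← Real.rpow_mul hc, mul_one_div (N:ℝ) p, mul_one_div p p, div_self hp.ne',
      Real.rpow_one, Real.rpow_add (by norm_num : (0:ℝ) < 2), mul_assoc]

lemma ennreal_term_eq (x y c p : ℝ) (hp : 0 < p) (hx : 0 ≤ x) (hc : 0 ≤ c) (N : ℕ) :
    ENNReal.ofReal x * ENNReal.ofReal ((2:ℝ) ^ y) *
      (((2 ^ N : ℕ) : ℝ≥0∞) * ENNReal.ofReal (c ^ p)) ^ (1/p)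
      = ENNReal.ofReal (x * ((2:ℝ) ^ (y + (N:ℝ)/p) * c)) := by
  have h1 : ((2 ^ N : ℕ) : ℝ≥0∞) * ENNReal.ofReal (c ^ p)
      = ENNReal.ofReal ((2:ℝ) ^ N * c ^ p) := by
    rw [ENNReal.ofReal_mul (by positivity), ← ENNReal.ofReal_natCast (2 ^ N)]
    norm_num
  rw [h1, ENNReal.ofReal_rpow_of_nonneg (by positivity) (by positivity),
      ← ENNReal.ofReal_mul hx, ← ENNReal.ofReal_mul (by positivity)]
  congr 1
  rw [mul_assoc, rpow_calc p c hp hc y N]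

lemma ennreal_term_le (x y c p : ℝ) (hp : 0 < p) (hx : 0 ≤ x) (hc : 0 ≤ c) (N : ℕ)
    (S : ℝ≥0∞) (hS : S ≤ ((2 ^ N : ℕ) : ℝ≥0∞) * ENNReal.ofReal (c ^ p)) :
    ENNReal.ofReal x * ENNReal.ofReal ((2:ℝ) ^ y) * S ^ (1/p)
      ≤ ENNReal.ofReal (x * ((2:ℝ) ^ (y + (N:ℝ)/p) * c)) := by
  rw [← ennreal_term_eq x y c p hp hx hc N]
  exact mul_le_mul_right (ENNReal.rpow_le_rpow hS (by positivity)) _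

/-- The level norm of the test sequence at level `j₀` equals `1`. -/
lemma level_eq_one (d : ℕ) (p₁ : ℝ) (hp₁ : 0 < p₁) (φ₁ : ℝ → ℝ)
    (hφ₁ : memG d p₁ φ₁) (hφ₁1 : φ₁ 1 = 1) (j₀ : ℕ) (ν₀ : ℤ) (hν₀ : ν₀ ≤ (j₀ : ℤ)) :
    levelNorm d φ₁ p₁ j₀
      (fun m => if dyadicCube d (j₀ : ℤ) m ⊆ dyadicCube d ν₀ 0 then
        (((φ₁ ((2 : ℝ) ^ (-ν₀)))⁻¹ : ℝ) : ℂ) else 0) = 1 := by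
  set c : ℝ := (φ₁ ((2 : ℝ) ^ (-ν₀)))⁻¹ with hc_def
  have hφpos : 0 < φ₁ ((2:ℝ) ^ (-ν₀)) := memG_pos hφ₁ hφ₁1 (two_zpow_mem ν₀)
  have hc : 0 ≤ c := by positivity
  set C : ℝ≥0∞ := ENNReal.ofReal (c ^ p₁) with hC_def
  set n₀ : ℕ := ((j₀ : ℤ) - ν₀).toNat with hn₀_def
  have hg : ∀ m : Fin d → ℤ, ENNReal.ofReal (norm
      ((if dyadicCube d (j₀:ℤ) m ⊆ dyadicCube d ν₀ 0 then ((c:ℝ):ℂ) else 0)) ^ p₁)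
      = if dyadicCube d (j₀:ℤ) m ⊆ dyadicCube d ν₀ 0 then C else 0 := by
    intro m
    split_ifs with h
    · rw [Complex.norm_real, Real.norm_of_nonneg hc]
    · rw [norm_zero, Real.zero_rpow hp₁.ne', ENNReal.ofReal_zero]
  have hmem₀ : ∀ m : Fin d → ℤ,
      dyadicCube d (j₀:ℤ) m ⊆ dyadicCube d ν₀ 0 ↔ m ∈ cubeFinset d n₀ 0 := by
    intro m
    rw [cube_subset_iff hν₀ m 0, mem_cubeFinset]
  -- the real-number bound for a single term
  have hreal : ∀ ν : ℤ, ∀ N : ℕ,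
      ((ν₀ ≤ ν ∧ (N:ℝ) = ((j₀:ℝ) - ν) * d) ∨ (ν ≤ ν₀ ∧ (N:ℝ) = ((j₀:ℝ) - ν₀) * d)) →
      φ₁ ((2:ℝ)^(-ν)) * ((2:ℝ) ^ ((((ν:ℝ) - (j₀:ℝ)) * ((d:ℝ)/p₁)) + (N:ℝ)/p₁) * c) ≤ 1 := by
    intro ν N hN
    rcases hN with ⟨hνν₀, hN⟩ | ⟨hνν₀, hN⟩
    · have he : (((ν:ℝ) - (j₀:ℝ)) * ((d:ℝ)/p₁)) + (N:ℝ)/p₁ = 0 := by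
        rw [hN]; field_simp; ring
      rw [he, Real.rpow_zero, one_mul]
      calc φ₁ ((2:ℝ)^(-ν)) * c ≤ φ₁ ((2:ℝ)^(-ν₀)) * c :=
            mul_le_mul_of_nonneg_right (memG_mono hφ₁ hνν₀) hc
        _ = 1 := by rw [hc_def, mul_inv_cancel₀ hφpos.ne']
    · have he : (((ν:ℝ) - (j₀:ℝ)) * ((d:ℝ)/p₁)) + (N:ℝ)/p₁
          = ((ν:ℝ) - (ν₀:ℝ)) * ((d:ℝ)/p₁) := by
        rw [hN]; field_simp; ring
      rw [he, ← mul_assoc]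
      calc φ₁ ((2:ℝ)^(-ν)) * (2:ℝ) ^ (((ν:ℝ) - (ν₀:ℝ)) * ((d:ℝ)/p₁)) * c
          ≤ φ₁ ((2:ℝ)^(-ν₀)) * c :=
            mul_le_mul_of_nonneg_right (memG_anti hφ₁ hνν₀) hc
        _ = 1 := by rw [hc_def, mul_inv_cancel₀ hφpos.ne']
  apply le_antisymm
  · -- upper bound
    refine iSup_le fun ν => iSup_le fun hν => iSup_le fun k => ?_
    set n : ℕ := ((j₀ : ℤ) - ν).toNat with hn_def
    have hφν : 0 ≤ φ₁ ((2:ℝ)^(-ν)) := hφ₁.1 _ (two_zpow_mem ν)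
    by_cases hcase : ν₀ ≤ ν
    · -- use the cube at level ν
      have hS : (∑' m : {m : Fin d → ℤ // dyadicCube d (j₀:ℤ) m ⊆ dyadicCube d ν k},
          ENNReal.ofReal (norm
            ((if dyadicCube d (j₀:ℤ) m.1 ⊆ dyadicCube d ν₀ 0 then ((c:ℝ):ℂ) else 0)) ^ p₁))
          ≤ ((2 ^ (n*d) : ℕ) : ℝ≥0∞) * C := by
        have := my_tsum_le
          (fun m => ENNReal.ofReal (norm
            ((if dyadicCube d (j₀:ℤ) m ⊆ dyadicCube d ν₀ 0 then ((c:ℝ):ℂ) else 0)) ^ p₁))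
          (fun m => dyadicCube d (j₀:ℤ) m ⊆ dyadicCube d ν k) C (cubeFinset d n k) ?_
        · rwa [card_cubeFinset] at this
        · intro m hm
          have hmF : m ∈ cubeFinset d n k :=
            mem_cubeFinset.2 ((cube_subset_iff hν m k).1 hm)
          rw [hg m, Set.indicator_of_mem
            (show m ∈ (↑(cubeFinset d n k) : Set (Fin d → ℤ)) from hmF)]
          split_ifs
          · exact le_refl _
          · exact zero_le
      calc ENNReal.ofReal (φ₁ ((2:ℝ)^(-ν))) *
            ENNReal.ofReal ((2:ℝ) ^ (((ν:ℝ) - (j₀:ℝ)) * ((d:ℝ)/p₁))) *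
            (∑' m : {m : Fin d → ℤ // dyadicCube d (j₀:ℤ) m ⊆ dyadicCube d ν k},
              ENNReal.ofReal (norm
                ((if dyadicCube d (j₀:ℤ) m.1 ⊆ dyadicCube d ν₀ 0 then ((c:ℝ):ℂ) else 0)) ^ p₁))
              ^ (1/p₁)
          ≤ ENNReal.ofReal (φ₁ ((2:ℝ)^(-ν)) *
              ((2:ℝ) ^ ((((ν:ℝ) - (j₀:ℝ)) * ((d:ℝ)/p₁)) + ((n*d : ℕ):ℝ)/p₁) * c)) :=
            ennreal_term_le _ _ c p₁ hp₁ hφν hc (n*d) _ hS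
        _ ≤ ENNReal.ofReal 1 := by
            apply ENNReal.ofReal_le_ofReal
            apply hreal ν (n*d)
            left
            refine ⟨hcase, ?_⟩
            have hn' : ((n : ℕ) : ℝ) = (j₀ : ℝ) - (ν : ℝ) := by
              have h' : ((n : ℕ) : ℤ) = (j₀ : ℤ) - ν := by
                rw [hn_def]; exact Int.toNat_of_nonneg (by omega)
              exact_mod_cast h'
            push_cast
            rw [hn']
        _ = 1 := ENNReal.ofReal_one
    · -- ν < ν₀ : use the cube at level ν₀
      push_neg at hcase
      have hS : (∑' m : {m : Fin d → ℤ // dyadicCube d (j₀:ℤ) m ⊆ dyadicCube d ν k},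
          ENNReal.ofReal (norm
            ((if dyadicCube d (j₀:ℤ) m.1 ⊆ dyadicCube d ν₀ 0 then ((c:ℝ):ℂ) else 0)) ^ p₁))
          ≤ ((2 ^ (n₀*d) : ℕ) : ℝ≥0∞) * C := by
        have := my_tsum_le
          (fun m => ENNReal.ofReal (norm
            ((if dyadicCube d (j₀:ℤ) m ⊆ dyadicCube d ν₀ 0 then ((c:ℝ):ℂ) else 0)) ^ p₁))
          (fun m => dyadicCube d (j₀:ℤ) m ⊆ dyadicCube d ν k) C (cubeFinset d n₀ 0) ?_
        · rwa [card_cubeFinset] at this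
        · intro m _
          rw [hg m]
          split_ifs with hm
          · rw [Set.indicator_of_mem
              (show m ∈ (↑(cubeFinset d n₀ 0) : Set (Fin d → ℤ)) from (hmem₀ m).1 hm)]
          · exact zero_le
      calc ENNReal.ofReal (φ₁ ((2:ℝ)^(-ν))) *
            ENNReal.ofReal ((2:ℝ) ^ (((ν:ℝ) - (j₀:ℝ)) * ((d:ℝ)/p₁))) *
            (∑' m : {m : Fin d → ℤ // dyadicCube d (j₀:ℤ) m ⊆ dyadicCube d ν k},
              ENNReal.ofReal (norm
                ((if dyadicCube d (j₀:ℤ) m.1 ⊆ dyadicCube d ν₀ 0 then ((c:ℝ):ℂ) else 0)) ^ p₁))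
              ^ (1/p₁)
          ≤ ENNReal.ofReal (φ₁ ((2:ℝ)^(-ν)) *
              ((2:ℝ) ^ ((((ν:ℝ) - (j₀:ℝ)) * ((d:ℝ)/p₁)) + ((n₀*d : ℕ):ℝ)/p₁) * c)) :=
            ennreal_term_le _ _ c p₁ hp₁ hφν hc (n₀*d) _ hS
        _ ≤ ENNReal.ofReal 1 := by
            apply ENNReal.ofReal_le_ofReal
            apply hreal ν (n₀*d)
            right
            refine ⟨hcase.le, ?_⟩
            have hn' : ((n₀ : ℕ) : ℝ) = (j₀ : ℝ) - (ν₀ : ℝ) := by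
              have h' : ((n₀ : ℕ) : ℤ) = (j₀ : ℤ) - ν₀ := by
                rw [hn₀_def]; exact Int.toNat_of_nonneg (by omega)
              exact_mod_cast h'
            push_cast
            rw [hn']
        _ = 1 := ENNReal.ofReal_one
  · -- lower bound: the term at ν = ν₀, k = 0 equals 1
    have hφν₀ : 0 ≤ φ₁ ((2:ℝ)^(-ν₀)) := hφpos.le
    have hS₀ : (∑' m : {m : Fin d → ℤ // dyadicCube d (j₀:ℤ) m ⊆ dyadicCube d ν₀ 0},
        ENNReal.ofReal (norm
          ((if dyadicCube d (j₀:ℤ) m.1 ⊆ dyadicCube d ν₀ 0 then ((c:ℝ):ℂ) else 0)) ^ p₁))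
        = ((2 ^ (n₀*d) : ℕ) : ℝ≥0∞) * C := by
      have h1 : ∀ m : {m : Fin d → ℤ // dyadicCube d (j₀:ℤ) m ⊆ dyadicCube d ν₀ 0},
          ENNReal.ofReal (norm
            ((if dyadicCube d (j₀:ℤ) m.1 ⊆ dyadicCube d ν₀ 0 then ((c:ℝ):ℂ) else 0)) ^ p₁) = C := by
        intro m
        rw [hg m.1, if_pos m.2]
      rw [tsum_congr h1, my_tsum_const C _ (cubeFinset d n₀ 0) hmem₀, card_cubeFinset]
    have hterm : ENNReal.ofReal (φ₁ ((2:ℝ)^(-ν₀))) *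
        ENNReal.ofReal ((2:ℝ) ^ (((ν₀:ℝ) - (j₀:ℝ)) * ((d:ℝ)/p₁))) *
        (∑' m : {m : Fin d → ℤ // dyadicCube d (j₀:ℤ) m ⊆ dyadicCube d ν₀ 0},
          ENNReal.ofReal (norm
            ((if dyadicCube d (j₀:ℤ) m.1 ⊆ dyadicCube d ν₀ 0 then ((c:ℝ):ℂ) else 0)) ^ p₁))
          ^ (1/p₁) = 1 := by
      rw [hS₀, ennreal_term_eq _ _ c p₁ hp₁ hφν₀ hc (n₀*d)]
      have he : (((ν₀:ℝ) - (j₀:ℝ)) * ((d:ℝ)/p₁)) + ((n₀*d : ℕ):ℝ)/p₁ = 0 := by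
        have hn' : ((n₀ : ℕ) : ℝ) = (j₀ : ℝ) - (ν₀ : ℝ) := by
          have h' : ((n₀ : ℕ) : ℤ) = (j₀ : ℤ) - ν₀ := by
            rw [hn₀_def]; exact Int.toNat_of_nonneg (by omega)
          exact_mod_cast h'
        push_cast
        rw [hn']
        field_simp
        ring
      rw [he, Real.rpow_zero, one_mul, hc_def, mul_inv_cancel₀ hφpos.ne', ENNReal.ofReal_one]
    calc (1:ℝ≥0∞) = ENNReal.ofReal (φ₁ ((2:ℝ)^(-ν₀))) *
        ENNReal.ofReal ((2:ℝ) ^ (((ν₀:ℝ) - (j₀:ℝ)) * ((d:ℝ)/p₁))) *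
        (∑' m : {m : Fin d → ℤ // dyadicCube d (j₀:ℤ) m ⊆ dyadicCube d ν₀ 0},
          ENNReal.ofReal (norm
            ((if dyadicCube d (j₀:ℤ) m.1 ⊆ dyadicCube d ν₀ 0 then ((c:ℝ):ℂ) else 0)) ^ p₁))
          ^ (1/p₁) := hterm.symm
      _ ≤ _ := by
        refine le_iSup_of_le ν₀ (le_iSup_of_le hν₀ (le_iSup_of_le 0 ?_))
        exact le_of_eq (by rfl)

/-- The level norm of the zero sequence is `0`. -/
lemma level_zero (d : ℕ) (p : ℝ) (hp : 0 < p) (φ : ℝ → ℝ) (j : ℕ)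
    (f : (Fin d → ℤ) → ℂ) (hf : ∀ m, f m = 0) :
    levelNorm d φ p j f = 0 := by
  apply le_antisymm _ (zero_le)
  refine iSup_le fun ν => iSup_le fun _ => iSup_le fun k => ?_
  have hz : (∑' m : {m : Fin d → ℤ // dyadicCube d (j:ℤ) m ⊆ dyadicCube d ν k},
      ENNReal.ofReal (‖f m.1‖ ^ p)) = 0 := by
    have : ∀ m : {m : Fin d → ℤ // dyadicCube d (j:ℤ) m ⊆ dyadicCube d ν k},
        ENNReal.ofReal (‖f m.1‖ ^ p) = 0 := by
      intro m
      rw [hf, norm_zero, Real.zero_rpow hp.ne', ENNReal.ofReal_zero]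
    rw [tsum_congr this, tsum_zero]
  rw [hz, ENNReal.zero_rpow_of_pos (by positivity), mul_zero]

/-- the test sequence `λ^{(j₀,ν₀)}` with `λ_{j,m} = φ₁(2^{-ν₀})⁻¹` when
`j = j₀` and `Q_{j₀,m} ⊆ Q_{ν₀,0}`, and `0` otherwise, satisfies
`‖λ^{(j₀,ν₀)} | n^{s₁}_{φ₁,p₁,q₁}‖ = 2^{j₀ s₁}`. -/
theorem test_sequence_norm (d : ℕ) (hd : 1 ≤ d) (s₁ p₁ : ℝ) (q₁ : ℝ≥0∞)
    (hp₁ : 0 < p₁) (hq₁ : 0 < q₁)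
    (φ₁ : ℝ → ℝ) (hφ₁ : memG d p₁ φ₁) (hφ₁1 : φ₁ 1 = 1)
    (j₀ : ℕ) (ν₀ : ℤ) (hν₀ : ν₀ ≤ (j₀ : ℤ)) :
    bmNorm d φ₁ s₁ p₁ q₁
      (fun j m =>
        if j = j₀ ∧ dyadicCube d (j₀ : ℤ) m ⊆ dyadicCube d ν₀ 0 then
          ((φ₁ ((2 : ℝ) ^ (-ν₀)))⁻¹ : ℝ)
        else 0) =
    ENNReal.ofReal ((2 : ℝ) ^ ((j₀ : ℝ) * s₁)) := by
  set lam : ℕ → (Fin d → ℤ) → ℂ := fun j m =>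
    if j = j₀ ∧ dyadicCube d (j₀ : ℤ) m ⊆ dyadicCube d ν₀ 0 then
      ((φ₁ ((2 : ℝ) ^ (-ν₀)))⁻¹ : ℝ)
    else 0 with hlam
  have hone : levelNorm d φ₁ p₁ j₀ (lam j₀) = 1 := by
    have : lam j₀ = fun m => if dyadicCube d (j₀ : ℤ) m ⊆ dyadicCube d ν₀ 0 then
        (((φ₁ ((2 : ℝ) ^ (-ν₀)))⁻¹ : ℝ) : ℂ) else 0 := by
      funext m
      simp [hlam]
    rw [this]
    exact level_eq_one d p₁ hp₁ φ₁ hφ₁ hφ₁1 j₀ ν₀ hν₀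
  have hzero : ∀ j : ℕ, j ≠ j₀ → levelNorm d φ₁ p₁ j (lam j) = 0 := by
    intro j hj
    apply level_zero d p₁ hp₁ φ₁ j
    intro m
    simp [hlam, hj]
  rw [bmNorm]
  by_cases hq : q₁ = ∞
  · rw [if_pos hq]
    apply le_antisymm
    · refine iSup_le fun j => ?_
      rcases eq_or_ne j j₀ with rfl | hj
      · rw [hone, mul_one]
      · rw [hzero j hj, mul_zero]
        exact zero_le
    · exact le_iSup_of_le j₀ (by rw [hone, mul_one])
  · rw [if_neg hq]
    have hqr : 0 < q₁.toReal := ENNReal.toReal_pos hq₁.ne' hq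
    have hsum : ∑' j : ℕ, (ENNReal.ofReal ((2:ℝ) ^ ((j:ℝ) * s₁)) *
        levelNorm d φ₁ p₁ j (lam j)) ^ q₁.toReal
        = (ENNReal.ofReal ((2:ℝ) ^ ((j₀:ℝ) * s₁))) ^ q₁.toReal := by
      rw [tsum_eq_single j₀]
      · rw [hone, mul_one]
      · intro j hj
        rw [hzero j hj, mul_zero, ENNReal.zero_rpow_of_pos hqr]
    rw [hsum, one_div, ENNReal.rpow_rpow_inv hqr.ne']
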